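/- Let k and d be positive integers and let Γ be a strongly connected digraph with dim(Γ) = k and diameter d. Then Γ is isomorphic to a subdigraph of the digraph Γ̄(d^(2k)+k, d), which is obtained from Γ(d^(2k)+k, d) by adding both arcs (u_i, u_j) and (u_j, u_i) for all 1 ≤ i < j ≤ k. -/

import Mathlib

/-!  Common definitions for weak metric dimension of digraphs.

A digraph is modelled by a vertex type `V` together with an arc relation
`A : V → V → Prop` (simplicity is expressed by `Irreflexive A`). -/

/-- There is a directed walk of length `n` from `x` to `y`. -/
def walkLen {V : Type*} (A : V → V → Prop) : ℕ → V → V → Prop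
  | 0 => fun x y => x = y
  | n + 1 => fun x y => ∃ z, A x z ∧ walkLen A n z y

/-- `∂(x,y)`: the length of a shortest directed path from `x` to `y`. -/
noncomputable def ddist {V : Type*} (A : V → V → Prop) (x y : V) : ℕ :=
  sInf {n | walkLen A n x y}

/-- The two way distance `∂̃(x,y) = (∂(x,y), ∂(y,x))`. -/
noncomputable def twoDist {V : Type*} (A : V → V → Prop) (x y : V) : ℕ × ℕ :=
  (ddist A x y, ddist A y x)

/-- Strong connectivity: any vertex can be reached from any vertex by a directed walk. -/
def IsStronglyConnected {V : Type*} (A : V → V → Prop) : Prop :=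
  ∀ x y : V, ∃ n, walkLen A n x y

/-- `S` is a weakly resolving set: distinct vertices have different tuples of
two way distances from the vertices of `S`. -/
def IsWeaklyResolving {V : Type*} (A : V → V → Prop) (S : Set V) : Prop :=
  ∀ u v : V, (∀ w ∈ S, twoDist A w u = twoDist A w v) → u = v

/-- The weak metric dimension: minimum cardinality of a weakly resolving set. -/
noncomputable def wdim {V : Type*} [Fintype V] (A : V → V → Prop) : ℕ :=
  sInf {k | ∃ S : Finset V, S.card = k ∧ IsWeaklyResolving A ↑S}

/-- The diameter: the maximum of `∂(x,y)` over all ordered pairs of vertices. -/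
noncomputable def diam {V : Type*} [Fintype V] (A : V → V → Prop) : ℕ :=
  sSup {m | ∃ x y : V, ddist A x y = m}

/-- `f(n,d)`: the least positive integer `k` with `k + d^(2k) ≥ n`. -/
noncomputable def fnd (n d : ℕ) : ℕ :=
  sInf {k | 0 < k ∧ n ≤ k + d ^ (2 * k)}

/-- An isomorphism from `(V, A)` onto `(W, B)` exists. -/
def IsIsoTo {V W : Type*} (A : V → V → Prop) (B : W → W → Prop) : Prop :=
  ∃ e : V ≃ W, ∀ x y, A x y ↔ B (e x) (e y)

/-- The digraph of Example 2.3: vertices `v_1, …, v_n` are the elements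
`0, …, n-1` of `Fin n` (so `v_i` is `i - 1`). -/
def egArc (n d : ℕ) : Fin n → Fin n → Prop := fun x y =>
  (x.val = n - 1 ∧ y.val ≤ n - d) ∨
  (x.val ≤ n - d ∧ y.val = n - d + 1) ∨
  (n - d + 1 ≤ x.val ∧ x.val ≤ n - 2 ∧ y.val = x.val + 1)

/-- The `r`-th (0-based) coordinate of the tuple `v_{j+1}` in Construction 2.4;
it lies in `{1, …, d}` and `j = Σ_r (coord r - 1) d^r`. -/
def gcoord (d j r : ℕ) : ℕ := j / d ^ r % d + 1

/-- The arc relation of Construction 2.4, with the `u`-vertices `Fin k` on the left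
and the `v`-vertices `Fin m` on the right of the sum. -/
def gammaArcKM (d k : ℕ) {m : ℕ} : Fin k ⊕ Fin m → Fin k ⊕ Fin m → Prop
  | .inl _, .inl _ => False
  | .inl i, .inr j => gcoord d j.val (2 * i.val) = 1
  | .inr j, .inl i => gcoord d j.val (2 * i.val + 1) = 1
  | .inr j, .inr l => j ≠ l ∧ ∀ r < k,
      gcoord d l.val (2 * r) ≤ gcoord d j.val (2 * r) + 1 ∧
      gcoord d j.val (2 * r + 1) ≤ gcoord d l.val (2 * r + 1) + 1

/-- The arc relation of `Γ̄`: `Γ` of Construction 2.4 together with symmetric arcs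
between any two distinct `u`-vertices. -/
def gammaBarArcKM (d k : ℕ) {m : ℕ} : Fin k ⊕ Fin m → Fin k ⊕ Fin m → Prop
  | .inl i, .inl i' => i ≠ i'
  | x, y => gammaArcKM d k x y

/-- The directed cycle of length `m` on `Fin m`. -/
def cycArc (m : ℕ) [NeZero m] : Fin m → Fin m → Prop := fun x y => y = x + 1

/-- `σ` is an automorphism of the digraph `(V, A)`. -/
def IsDigraphAuto {V : Type*} (A : V → V → Prop) (σ : V ≃ V) : Prop :=
  ∀ a b, A a b ↔ A (σ a) (σ b)

/-- Vertex-transitivity. -/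
def IsVertexTransitive {V : Type*} (A : V → V → Prop) : Prop :=
  ∀ x y : V, ∃ σ : V ≃ V, IsDigraphAuto A σ ∧ σ x = y

/-- Weak distance-transitivity. -/
def IsWeaklyDistanceTransitive {V : Type*} (A : V → V → Prop) : Prop :=
  ∀ x y x' y' : V, twoDist A x y = twoDist A x' y' →
    ∃ σ : V ≃ V, IsDigraphAuto A σ ∧ σ x = x' ∧ σ y = y'

/-- Weak distance-regularity. -/
noncomputable def IsWeaklyDistanceRegular {V : Type*} (A : V → V → Prop) : Prop :=
  ∀ i j : ℕ × ℕ, (∃ a b : V, twoDist A a b = i) → (∃ a b : V, twoDist A a b = j) →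
    ∀ x y x' y' : V, twoDist A x y = twoDist A x' y' →
      Set.ncard {z : V | twoDist A x z = i ∧ twoDist A z y = j} =
      Set.ncard {z : V | twoDist A x' z = i ∧ twoDist A z y' = j}

/-- The complete digraph `K_t`. -/
def Krel (t : ℕ) : Fin t → Fin t → Prop := fun x y => x ≠ y

/-- The null digraph `K̄_t`. -/
def Nrel (t : ℕ) : Fin t → Fin t → Prop := fun _ _ => False

/-- The directed path `P_2` of length `1`. -/
def P2rel : Fin 2 → Fin 2 → Prop := fun x y => x = 0 ∧ y = 1

/-- The digraph `G_1` on `{0,1,2}` with arcs `(0,1),(1,2),(2,1),(2,0)`. -/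
def G1rel : Fin 3 → Fin 3 → Prop := fun x y =>
  (x = 0 ∧ y = 1) ∨ (x = 1 ∧ y = 2) ∨ (x = 2 ∧ y = 1) ∨ (x = 2 ∧ y = 0)

/-- The digraph `G_2` on `{0,1,2}` with arcs `(0,1),(1,0),(1,2),(2,1),(2,0)`. -/
def G2rel : Fin 3 → Fin 3 → Prop := fun x y =>
  (x = 0 ∧ y = 1) ∨ (x = 1 ∧ y = 0) ∨ (x = 1 ∧ y = 2) ∨ (x = 2 ∧ y = 1) ∨ (x = 2 ∧ y = 0)

/-- The generalized lexicographic product `G[H₀, H₁, H₂]` for a digraph `G` on `{0,1,2}`. -/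
def glex3 {α β γ : Type*} (G : Fin 3 → Fin 3 → Prop)
    (H0 : α → α → Prop) (H1 : β → β → Prop) (H2 : γ → γ → Prop) :
    α ⊕ β ⊕ γ → α ⊕ β ⊕ γ → Prop
  | .inl x, .inl y => H0 x y
  | .inl _, .inr (.inl _) => G 0 1
  | .inl _, .inr (.inr _) => G 0 2
  | .inr (.inl _), .inl _ => G 1 0
  | .inr (.inl x), .inr (.inl y) => H1 x y
  | .inr (.inl _), .inr (.inr _) => G 1 2
  | .inr (.inr _), .inl _ => G 2 0
  | .inr (.inr _), .inr (.inl _) => G 2 1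
  | .inr (.inr x), .inr (.inr y) => H2 x y

/-- A clique in a digraph: the two way distance between any two distinct
vertices of `S` is `(1,1)`. -/
noncomputable def DClique {V : Type*} (A : V → V → Prop) (S : Set V) : Prop :=
  ∀ u ∈ S, ∀ v ∈ S, u ≠ v → twoDist A u v = (1, 1)

/-- An independent set in a digraph: no arcs inside `R`. -/
def DIndependent {V : Type*} (A : V → V → Prop) (R : Set V) : Prop :=
  ∀ u ∈ R, ∀ v ∈ R, ¬ A u v


/-! Enumerate a weakly resolving set `W = {w_1, …, w_k}` of minimum size. Send `w_i` to `u_i`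
and a vertex `v ∉ W` to the vertex of `Γ` with coordinates
`(∂(w_1,v), ∂(v,w_1), …, ∂(w_k,v), ∂(v,w_k)) ∈ {1, …, d}^(2k)`; this is injective precisely
because `W` is weakly resolving. Arcs are preserved: an arc between `w_i` and `v ∉ W` makes the
corresponding coordinate of `v` equal to `1`, along an arc `x → y` outside `W` each `∂(w_r, ·)`
grows by at most one and each `∂(·, w_r)` drops by at most one, and distinct vertices of `W`
are joined both ways in `Γ̄`. -/

open Finset Function

section Distance

variable {V : Type*} {A : V → V → Prop}

lemma walkLen_succ_of_walkLen_of_adj : ∀ {n : ℕ} {x y z : V},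
    walkLen A n x y → A y z → walkLen A (n + 1) x z
  | 0, _, _, z, rfl, hyz => ⟨z, hyz, rfl⟩
  | _ + 1, _, _, _, ⟨u, hxu, hw⟩, hyz => ⟨u, hxu, walkLen_succ_of_walkLen_of_adj hw hyz⟩

lemma ddist_le_of_walkLen {n : ℕ} {x y : V} (h : walkLen A n x y) : ddist A x y ≤ n :=
  Nat.sInf_le h

lemma walkLen_ddist (hsc : IsStronglyConnected A) (x y : V) : walkLen A (ddist A x y) x y :=
  Nat.sInf_mem (hsc x y)

lemma ddist_self (x : V) : ddist A x x = 0 :=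
  Nat.le_zero.mp (ddist_le_of_walkLen (n := 0) rfl)

lemma ddist_pos (hsc : IsStronglyConnected A) {x y : V} (h : x ≠ y) : 0 < ddist A x y := by
  by_contra! h0
  have := walkLen_ddist hsc x y
  rw [Nat.le_zero.mp h0] at this
  exact h this

lemma ddist_eq_one_of_adj (hsc : IsStronglyConnected A) {x y : V} (hxy : A x y) (hne : x ≠ y) :
    ddist A x y = 1 :=
  le_antisymm (ddist_le_of_walkLen ⟨y, hxy, rfl⟩) (ddist_pos hsc hne)

lemma ddist_le_ddist_add_one_of_adj_right (hsc : IsStronglyConnected A) (x : V) {y z : V}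
    (hyz : A y z) : ddist A x z ≤ ddist A x y + 1 :=
  ddist_le_of_walkLen (walkLen_succ_of_walkLen_of_adj (walkLen_ddist hsc x y) hyz)

lemma ddist_le_ddist_add_one_of_adj_left (hsc : IsStronglyConnected A) {x y : V} (z : V)
    (hxy : A x y) : ddist A x z ≤ ddist A y z + 1 :=
  ddist_le_of_walkLen ⟨y, hxy, walkLen_ddist hsc y z⟩

lemma ddist_le_diam [Fintype V] (x y : V) : ddist A x y ≤ diam A := by
  refine le_csSup ((Set.finite_range fun p : V × V => ddist A p.1 p.2).subset ?_).bddAbove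
    ⟨x, y, rfl⟩
  rintro _ ⟨a, b, rfl⟩
  exact ⟨(a, b), rfl⟩

lemma isWeaklyResolving_univ (hsc : IsStronglyConnected A) : IsWeaklyResolving A Set.univ := by
  intro u v h
  by_contra huv
  have := congrArg Prod.fst (h u trivial)
  simp only [twoDist, ddist_self] at this
  exact (ddist_pos hsc huv).ne this

lemma exists_isWeaklyResolving_card_eq_wdim [Fintype V] (hsc : IsStronglyConnected A) :
    ∃ S : Finset V, #S = wdim A ∧ IsWeaklyResolving A S :=
  Nat.sInf_mem (s := {k | ∃ S : Finset V, #S = k ∧ IsWeaklyResolving A S})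
    ⟨_, univ, rfl, by simpa using isWeaklyResolving_univ hsc⟩

end Distance

lemma fnd_pow_two_mul_add_self {k : ℕ} (d : ℕ) (hk : 0 < k) : fnd (d ^ (2 * k) + k) d = k := by
  have hmem : k ∈ {j | 0 < j ∧ d ^ (2 * k) + k ≤ j + d ^ (2 * j)} := ⟨hk, (add_comm _ _).le⟩
  refine le_antisymm (Nat.sInf_le hmem) (le_csInf ⟨k, hmem⟩ fun j hj => ?_)
  obtain ⟨hj, hjk⟩ := hj
  by_contra! hlt
  have : d ^ (2 * j) ≤ d ^ (2 * k) := by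
    rcases d.eq_zero_or_pos with rfl | hd
    · simp [hj.ne']
    · exact Nat.pow_le_pow_right hd (by omega)
  omega

lemma gcoord_finFunctionFinEquiv {d n : ℕ} (x : Fin n → Fin d) (r : Fin n) :
    gcoord d (finFunctionFinEquiv x) r = x r + 1 := by
  rw [gcoord, ← congrArg Fin.val (congrFun (finFunctionFinEquiv.symm_apply_apply x) r)]
  rfl

lemma exists_gcoord_interleave {k d : ℕ} (a b : Fin k → ℕ)
    (ha : ∀ i, a i ∈ Set.Icc 1 d) (hb : ∀ i, b i ∈ Set.Icc 1 d) :
    ∃ j : Fin (d ^ (2 * k)), ∀ i : Fin k,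
      gcoord d j (2 * i) = a i ∧ gcoord d j (2 * i + 1) = b i := by
  let x : Fin (2 * k) → Fin d := fun r =>
    let i : Fin k := ⟨r / 2, by omega⟩
    if r.val % 2 = 0 then ⟨a i - 1, Nat.sub_one_lt_of_le (ha i).1 (ha i).2⟩
    else ⟨b i - 1, Nat.sub_one_lt_of_le (hb i).1 (hb i).2⟩
  refine ⟨finFunctionFinEquiv x, fun i => ⟨?_, ?_⟩⟩
  · rw [gcoord_finFunctionFinEquiv x ⟨2 * i, by omega⟩]
    simp [x, Nat.sub_add_cancel (ha i).1]
  · rw [gcoord_finFunctionFinEquiv x ⟨2 * i + 1, by omega⟩]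
    simp [x, show (2 * (i : ℕ) + 1) / 2 = i by omega, Nat.sub_add_cancel (hb i).1]

section Embedding

variable {V : Type*} {A : V → V → Prop}

lemma exists_gcoord_eq_ddist (hsc : IsStronglyConnected A) {d : ℕ}
    (hd : ∀ x y, ddist A x y ≤ d) {S : Finset V} {k : ℕ} (e : S ≃ Fin k) :
    ∃ c : ∀ v ∉ S, Fin (d ^ (2 * k)), ∀ v hv (i : Fin k),
      gcoord d (c v hv) (2 * i) = ddist A (e.symm i) v ∧
      gcoord d (c v hv) (2 * i + 1) = ddist A v (e.symm i) := by
  have hne (v : V) (hv : v ∉ S) (i : Fin k) : (e.symm i : V) ≠ v :=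
    fun h => hv (h ▸ (e.symm i).2)
  choose c hc using fun v hv => exists_gcoord_interleave
    (fun i => ddist A (e.symm i) v) (fun i => ddist A v (e.symm i))
    (fun i => ⟨ddist_pos hsc (hne v hv i), hd _ _⟩)
    (fun i => ⟨ddist_pos hsc (hne v hv i).symm, hd _ _⟩)
  exact ⟨c, hc⟩

theorem exists_embedding_gammaBar (hirr : Irreflexive A) (hsc : IsStronglyConnected A)
    {S : Finset V} (hS : IsWeaklyResolving A S) {k d : ℕ} (hSk : #S = k)
    (hd : ∀ x y, ddist A x y ≤ d) :
    ∃ φ : V → Fin k ⊕ Fin (d ^ (2 * k)),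
      Injective φ ∧ ∀ x y, A x y → gammaBarArcKM d k (φ x) (φ y) := by
  classical
  let e := S.equivFinOfCardEq hSk
  obtain ⟨c, hc⟩ := exists_gcoord_eq_ddist hsc hd e
  have hc_inj (x : V) (hx : x ∉ S) (y : V) (hy : y ∉ S) (hxy : c x hx = c y hy) : x = y := by
    refine hS x y fun u hu => ?_
    obtain ⟨h1, h2⟩ := hc x hx (e ⟨u, hu⟩)
    obtain ⟨h3, h4⟩ := hc y hy (e ⟨u, hu⟩)
    rw [hxy, h3] at h1
    rw [hxy, h4] at h2
    simp only [Equiv.symm_apply_apply] at h1 h2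
    simp only [twoDist, h1, h2]
  refine ⟨fun v => if hv : v ∈ S then .inl (e ⟨v, hv⟩) else .inr (c v hv), ?_, ?_⟩
  · intro x y hxy
    by_cases hx : x ∈ S <;> by_cases hy : y ∈ S <;>
      simp only [hx, hy, ↓reduceDIte, reduceCtorEq, Sum.inl.injEq, Sum.inr.injEq,
        EmbeddingLike.apply_eq_iff_eq, Subtype.mk.injEq] at hxy
    · exact hxy
    · exact hc_inj x hx y hy hxy
  · intro x y hxy
    have hne : x ≠ y := fun h => hirr x (h ▸ hxy)
    by_cases hx : x ∈ S <;> by_cases hy : y ∈ S <;> simp only [hx, hy, ↓reduceDIte]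
    · simpa [gammaBarArcKM] using hne
    · show gcoord d (c y hy) (2 * e ⟨x, hx⟩) = 1
      rw [(hc y hy _).1, Equiv.symm_apply_apply]
      exact ddist_eq_one_of_adj hsc hxy hne
    · show gcoord d (c x hx) (2 * e ⟨y, hy⟩ + 1) = 1
      rw [(hc x hx _).2, Equiv.symm_apply_apply]
      exact ddist_eq_one_of_adj hsc hxy hne
    · refine ⟨fun h => hne (hc_inj x hx y hy h), fun r hr => ?_⟩
      obtain ⟨hx1, hx2⟩ := hc x hx ⟨r, hr⟩
      obtain ⟨hy1, hy2⟩ := hc y hy ⟨r, hr⟩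
      rw [hx1, hx2, hy1, hy2]
      exact ⟨ddist_le_ddist_add_one_of_adj_right hsc _ hxy,
        ddist_le_ddist_add_one_of_adj_left hsc _ hxy⟩

end Embedding

theorem embeds_in_gammaBar_general {V : Type*} [Fintype V] (A : V → V → Prop)
    (hirr : Irreflexive A) (hsc : IsStronglyConnected A)
    (k d : ℕ) (hk : 0 < k)
    (hdim : wdim A = k) (hdiam : diam A = d) :
    ∃ φ : V → Fin (fnd (d ^ (2 * k) + k) d) ⊕ Fin (d ^ (2 * k) + k - fnd (d ^ (2 * k) + k) d),
      Function.Injective φ ∧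
      ∀ x y : V, A x y → gammaBarArcKM d (fnd (d ^ (2 * k) + k) d) (φ x) (φ y) := by
  rw [fnd_pow_two_mul_add_self d hk, Nat.add_sub_cancel]
  obtain ⟨S, hSk, hS⟩ := exists_isWeaklyResolving_card_eq_wdim hsc
  exact exists_embedding_gammaBar hirr hsc hS (hSk.trans hdim) fun x y => hdiam ▸ ddist_le_diam x y

/-- Lemma 2.6(i). A `k`-dimensional digraph with diameter `d` is
isomorphic to a subdigraph of `Γ̄(d^(2k)+k, d)`. -/
theorem embeds_in_gammaBar {V : Type*} [Fintype V] (A : V → V → Prop)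
    (hirr : Irreflexive A) (hsc : IsStronglyConnected A)
    (k d : ℕ) (hk : 0 < k) (hd : 0 < d)
    (hdim : wdim A = k) (hdiam : diam A = d) :
    ∃ φ : V → Fin (fnd (d ^ (2 * k) + k) d) ⊕ Fin (d ^ (2 * k) + k - fnd (d ^ (2 * k) + k) d),
      Function.Injective φ ∧
      ∀ x y : V, A x y → gammaBarArcKM d (fnd (d ^ (2 * k) + k) d) (φ x) (φ y) :=
  embeds_in_gammaBar_general A hirr hsc k d hk hdim hdiam
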